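/- Let (G,T) be a bipartite graft with color classes A and B, let F be a minimum join of (G,T), and let X ⊆ A be a maximal bipartitic extreme set. Let (Ĝ, T̂) be a graft with V(Ĝ) ⊇ V(G), E(Ĝ) ⊇ E(G), T̂ = T, such that every edge of E(Ĝ)∖E(G) joins a vertex of X to a vertex of V(Ĝ)∖V(G). Then a set of edges is a minimum join of (Ĝ,T̂) if and only if it is a minimum join of (G,T). -/

import Mathlib

open scoped Classical

variable {V : Type*}

/-- The `F`-weight of a walk: number of edges outside `F` minus number of edges in `F`. -/
noncomputable def walkWeight {G : SimpleGraph V} (F : Set (Sym2 V)) {x y : V}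
    (p : G.Walk x y) : ℤ :=
  ((p.edges.filter fun e => e ∉ F).length : ℤ) -
    ((p.edges.filter fun e => e ∈ F).length : ℤ)

/-- The `F`-distance between `x` and `y`: the minimum `F`-weight of a path between them. -/
noncomputable def distF (G : SimpleGraph V) (F : Set (Sym2 V)) (x y : V) : ℤ :=
  sInf {w : ℤ | ∃ p : G.Walk x y, p.IsPath ∧ walkWeight F p = w}

/-- `F` is a join of the graft `(G, T)`. -/
def IsJoin (G : SimpleGraph V) (T : Set V) (F : Set (Sym2 V)) : Prop :=
  F ⊆ G.edgeSet ∧ ∀ v : V, v ∈ T ↔ Odd {e ∈ F | v ∈ e}.ncard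

/-- `F` is a minimum join of the graft `(G, T)`. -/
def IsMinJoin (G : SimpleGraph V) (T : Set V) (F : Set (Sym2 V)) : Prop :=
  IsJoin G T F ∧ ∀ F' : Set (Sym2 V), IsJoin G T F' → F.ncard ≤ F'.ncard

/-- `(G, T)` is a graft: every connected component contains an even number of vertices of `T`. -/
def IsGraft (G : SimpleGraph V) (T : Set V) : Prop :=
  ∀ v : V, Even {u | u ∈ T ∧ G.Reachable v u}.ncard

/-- `X` is an extreme set: `d_F(x, y) ≥ 0` for all `x, y ∈ X`. -/
def IsExtremeSet (G : SimpleGraph V) (F : Set (Sym2 V)) (X : Set V) : Prop :=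
  ∀ x ∈ X, ∀ y ∈ X, 0 ≤ distF G F x y

/-- `G` is bipartite with vertex set `Vset` and color classes `A`, `B`. -/
def IsBipartitionOn (G : SimpleGraph V) (Vset A B : Set V) : Prop :=
  A ∪ B = Vset ∧ Disjoint A B ∧
    ∀ v w : V, G.Adj v w → (v ∈ A ∧ w ∈ B) ∨ (v ∈ B ∧ w ∈ A)

/-- `X` is a maximal bipartitic extreme set with respect to color classes `A`, `B`. -/
def MaxBipExtreme (G : SimpleGraph V) (F : Set (Sym2 V)) (A B X : Set V) : Prop :=
  IsExtremeSet G F X ∧ (X ⊆ A ∨ X ⊆ B) ∧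
    ∀ X' : Set V, IsExtremeSet G F X' → (X' ⊆ A ∨ X' ⊆ B) → X ⊆ X' → X' = X

/-- `D_X`: the vertices of `Vset ∖ X` at negative `F`-distance from `X`. -/
def Dset (G : SimpleGraph V) (F : Set (Sym2 V)) (Vset X : Set V) : Set V :=
  {y | y ∈ Vset ∧ y ∉ X ∧ ∃ x ∈ X, distF G F x y < 0}

/-- `C_X = Vset ∖ X ∖ D_X`. -/
def Cset (G : SimpleGraph V) (F : Set (Sym2 V)) (Vset X : Set V) : Set V :=
  (Vset \ X) \ Dset G F Vset X

/-- `min_{x ∈ X} d_F(x, y)`. -/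
noncomputable def minDistX (G : SimpleGraph V) (F : Set (Sym2 V)) (X : Set V) (y : V) : ℤ :=
  sInf {d : ℤ | ∃ x ∈ X, distF G F x y = d}

/-- The graph `G − S` obtained by deleting the vertices of `S`. -/
def gDelete (G : SimpleGraph V) (S : Set V) : SimpleGraph V where
  Adj v w := G.Adj v w ∧ v ∉ S ∧ w ∉ S
  symm := ⟨fun v w ⟨h, hv, hw⟩ => ⟨h.symm, hw, hv⟩⟩
  loopless := ⟨fun v h => G.loopless.irrefl v h.1⟩

/-- The subgraph of `G` induced by `S`. -/
def gRestrict (G : SimpleGraph V) (S : Set V) : SimpleGraph V where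
  Adj v w := G.Adj v w ∧ v ∈ S ∧ w ∈ S
  symm := ⟨fun v w ⟨h, hv, hw⟩ => ⟨h.symm, hw, hv⟩⟩
  loopless := ⟨fun v h => G.loopless.irrefl v h.1⟩

/-- `C` is (the vertex set of) a connected component of `G − X`. -/
def IsCompOf (G : SimpleGraph V) (X C : Set V) : Prop :=
  ∃ v, v ∉ X ∧ C = {u | (gDelete G X).Reachable v u}

/-- `δ_G(C)`: the edges of `G` with exactly one end in `C`. -/
def edgeBoundary (G : SimpleGraph V) (C : Set V) : Set (Sym2 V) :=
  {e | e ∈ G.edgeSet ∧ ∃ u v : V, e = s(u, v) ∧ u ∈ C ∧ v ∉ C}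

/-- `X` is an `F`-combic set of the graft `(G, T)`. -/
def IsCombic (G : SimpleGraph V) (T : Set V) (F : Set (Sym2 V)) (X : Set V) : Prop :=
  (∀ u v : V, s(u, v) ∈ F → ¬(u ∈ X ∧ v ∈ X)) ∧
  (∀ C : Set V, IsCompOf G X C → Odd (C ∩ T).ncard →
      (edgeBoundary G C ∩ F).ncard = 1) ∧
  (∀ C : Set V, IsCompOf G X C → Even (C ∩ T).ncard →
      edgeBoundary G C ∩ F = ∅)

/-- The rootlization of `G` by the mount `X`, root `r` and attachment `s`. -/
def rootlize (G : SimpleGraph V) (X : Set V) (r s : V) : SimpleGraph V :=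
  SimpleGraph.fromRel fun v w => G.Adj v w ∨ (v = r ∧ w = s) ∨ (v = s ∧ w ∈ X)

/-- The initial component of `r`: the connected component of `r` in the subgraph
induced by the vertices at nonpositive `F`-distance from `r`. -/
def initComp (G : SimpleGraph V) (F : Set (Sym2 V)) (r : V) : Set V :=
  {x | (gRestrict G {y | distF G F r y ≤ 0}).Reachable r x}

/-!
For a join `F₀` of `(Ĝ, T)` put `J = F₀ ∩ E(G)`. Every new edge joins `X` to a vertex outside
`V(G)`, so the odd-degree vertices of `F ∆ J` all lie in `X`. An edge set `D ⊆ E(G)` whose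
odd-degree vertices lie in `X` has non-negative `F`-weight `|D ∖ F| - |D ∩ F|`: a path of `D`
between two odd-degree vertices has non-negative weight because `X` is extreme, removing it keeps
the odd-degree vertices inside `X`, and once all degrees are even `F ∆ D` is again a join, so
minimality of `F` applies. Hence `|J| = |F| + w_F(F ∆ J) ≥ |F|` and `|F₀| ≥ |F| + |F₀ ∖ E(G)|`,
which forces every minimum join of `(Ĝ, T)` to avoid the new edges and to have size `|F|`.
-/

open scoped symmDiff

theorem Set.ncard_symmDiff_add_two_mul_ncard_inter {α : Type*} [Finite α] (s t : Set α) :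
    (s ∆ t).ncard + 2 * (s ∩ t).ncard = s.ncard + t.ncard := by
  rw [Set.symmDiff_def, Set.ncard_union_eq disjoint_sdiff_sdiff]
  have hs := Set.ncard_inter_add_ncard_sdiff_eq_ncard s t
  have ht := Set.ncard_inter_add_ncard_sdiff_eq_ncard t s
  rw [Set.inter_comm t s] at ht
  omega

theorem Set.odd_ncard_symmDiff {α : Type*} [Finite α] (s t : Set α) :
    Odd (s ∆ t).ncard ↔ Xor (Odd s.ncard) (Odd t.ncard) := by
  have h := Set.ncard_symmDiff_add_two_mul_ncard_inter s t
  simp only [← Nat.not_even_iff_odd, Nat.even_iff, xor_iff_not_iff]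
  omega

def oddVerts (D : Set (Sym2 V)) : Set V :=
  {v | Odd {e ∈ D | v ∈ e}.ncard}

theorem exists_mem_of_mem_oddVerts {D : Set (Sym2 V)} {v : V} (hv : v ∈ oddVerts D) :
    ∃ e ∈ D, v ∈ e :=
  Set.nonempty_of_ncard_ne_zero hv.pos.ne'

theorem oddVerts_symmDiff [Finite V] (D D' : Set (Sym2 V)) :
    oddVerts (D ∆ D') = oddVerts D ∆ oddVerts D' := by
  ext v
  have hsep : {e ∈ D ∆ D' | v ∈ e} = {e ∈ D | v ∈ e} ∆ {e ∈ D' | v ∈ e} := by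
    ext e; simp only [Set.mem_ofPred_eq, Set.mem_symmDiff]; tauto
  change Odd _ ↔ _
  rw [hsep, Set.odd_ncard_symmDiff]
  rfl

theorem isJoin_iff {G : SimpleGraph V} {T : Set V} {F : Set (Sym2 V)} :
    IsJoin G T F ↔ F ⊆ G.edgeSet ∧ oddVerts F = T := by
  simp only [IsJoin, Set.ext_iff, oddVerts, Set.mem_ofPred_eq, iff_comm]

theorem IsJoin.symmDiff [Finite V] {G : SimpleGraph V} {T T' : Set V} {F D : Set (Sym2 V)}
    (hF : IsJoin G T F) (hD : IsJoin G T' D) : IsJoin G (T ∆ T') (F ∆ D) := by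
  rw [isJoin_iff] at *
  exact ⟨Set.symmDiff_subset_union.trans (Set.union_subset hF.1 hD.1),
    by rw [oddVerts_symmDiff, hF.2, hD.2]⟩

noncomputable def edgeSetWeight (F D : Set (Sym2 V)) : ℤ :=
  (D \ F).ncard - (D ∩ F).ncard

theorem edgeSetWeight_union [Finite V] (F : Set (Sym2 V)) {D D' : Set (Sym2 V)}
    (h : Disjoint D D') :
    edgeSetWeight F (D ∪ D') = edgeSetWeight F D + edgeSetWeight F D' := by
  rw [edgeSetWeight, edgeSetWeight, edgeSetWeight, Set.union_sdiff_distrib,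
    Set.union_inter_distrib_right,
    Set.ncard_union_eq (h.mono Set.sdiff_subset Set.sdiff_subset),
    Set.ncard_union_eq (h.mono Set.inter_subset_left Set.inter_subset_left)]
  push_cast
  ring

theorem ncard_symmDiff_eq_add_edgeSetWeight [Finite V] (F D : Set (Sym2 V)) :
    ((F ∆ D).ncard : ℤ) = F.ncard + edgeSetWeight F D := by
  have h := Set.ncard_symmDiff_add_two_mul_ncard_inter F D
  have hD := Set.ncard_inter_add_ncard_sdiff_eq_ncard D F
  rw [Set.inter_comm F D] at h
  rw [edgeSetWeight]
  omega

theorem List.ncard_setOf_mem_and_of_nodup {α : Type*} {l : List α} (hl : l.Nodup)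
    (P : α → Prop) [DecidablePred P] :
    {a | a ∈ l ∧ P a}.ncard = (l.filter fun a => P a).length := by
  have h : {a | a ∈ l ∧ P a} = ↑(l.filter fun a => P a).toFinset := by
    ext a
    simp
  rw [h, Set.ncard_coe_finset, List.toFinset_card_of_nodup (hl.filter _)]

namespace SimpleGraph.Walk

variable {G : SimpleGraph V} {x y : V} {p : G.Walk x y}

theorem IsTrail.walkWeight_eq (F : Set (Sym2 V)) (hp : p.IsTrail) :
    walkWeight F p = edgeSetWeight F {e | e ∈ p.edges} := by
  rw [walkWeight, edgeSetWeight]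
  congr 2
  · exact (List.ncard_setOf_mem_and_of_nodup hp.edges_nodup (· ∉ F)).symm
  · exact (List.ncard_setOf_mem_and_of_nodup hp.edges_nodup (· ∈ F)).symm

theorem IsTrail.oddVerts_edges (hp : p.IsTrail) (hxy : x ≠ y) :
    oddVerts {e | e ∈ p.edges} = {x, y} := by
  ext v
  have hcount : {e | e ∈ p.edges ∧ v ∈ e}.ncard = p.edges.countP (fun e => v ∈ e) := by
    rw [List.countP_eq_length_filter, List.ncard_setOf_mem_and_of_nodup hp.edges_nodup]
  change Odd {e | e ∈ p.edges ∧ v ∈ e}.ncard ↔ _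
  rw [hcount, ← Nat.not_even_iff_odd, hp.even_countP_edges_iff v]
  simp only [Set.mem_insert_iff, Set.mem_singleton_iff]
  tauto

end SimpleGraph.Walk

theorem distF_le_walkWeight [Finite V] {G : SimpleGraph V} (F : Set (Sym2 V)) {x y : V}
    {p : G.Walk x y} (hp : p.IsPath) : distF G F x y ≤ walkWeight F p := by
  have := Fintype.ofFinite V
  refine csInf_le ⟨-(Fintype.card V : ℤ), ?_⟩ ⟨p, hp, rfl⟩
  rintro w ⟨q, hq, rfl⟩
  have hlen : (q.edges.filter fun e => e ∈ F).length ≤ q.length :=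
    (List.length_filter_le _ _).trans q.length_edges.le
  have := hq.length_lt
  rw [walkWeight]
  omega

namespace SimpleGraph

theorem degree_fromEdgeSet {D : Set (Sym2 V)} (hD : ∀ e ∈ D, ¬e.IsDiag) (v : V)
    [Fintype ((fromEdgeSet D).neighborSet v)] :
    (fromEdgeSet D).degree v = {e ∈ D | v ∈ e}.ncard := by
  have hE : (fromEdgeSet D).edgeSet = D := by
    rw [edgeSet_fromEdgeSet, sdiff_eq_left]
    exact Set.disjoint_left.mpr hD
  rw [← card_neighborSet_eq_degree, ← Nat.card_eq_fintype_card,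
    ← Nat.card_congr (incidenceSetEquivNeighborSet _ v), Nat.card_coe_set_eq, incidenceSet, hE]

theorem Reachable.of_mem_edgeSet {H : SimpleGraph V} {e : Sym2 V} (he : e ∈ H.edgeSet)
    {u v : V} (hu : u ∈ e) (hv : v ∈ e) : H.Reachable u v := by
  induction e using Sym2.ind with
  | _ a b =>
    have hab : H.Adj a b := he
    rw [Sym2.mem_iff] at hu hv
    rcases hu with rfl | rfl <;> rcases hv with rfl | rfl
    exacts [.rfl, hab.reachable, hab.symm.reachable, .rfl]

theorem exists_isPath_of_mem_oddVerts [Fintype V] {G : SimpleGraph V} {D : Set (Sym2 V)}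
    (hD : D ⊆ G.edgeSet) {z : V} (hz : z ∈ oddVerts D) :
    ∃ z' ∈ oddVerts D, z' ≠ z ∧
      ∃ p : G.Walk z z', p.IsPath ∧ {e | e ∈ p.edges} ⊆ D := by
  set H := fromEdgeSet D
  have hHD : H.edgeSet ⊆ D := by rw [edgeSet_fromEdgeSet]; exact Set.sdiff_subset
  have hDH : D ⊆ H.edgeSet := by
    rw [edgeSet_fromEdgeSet]
    exact fun e he => ⟨he, G.not_isDiag_of_mem_edgeSet (hD he)⟩
  -- the handshake lemma is applied to the edges of `D` in the component of `z`
  set Dz : Set (Sym2 V) := {e ∈ D | ∃ u ∈ e, H.Reachable z u}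
  have hsep : ∀ v, H.Reachable z v → {e ∈ Dz | v ∈ e} = {e ∈ D | v ∈ e} := fun v hv => by
    ext e
    exact ⟨fun ⟨⟨he, _⟩, hve⟩ => ⟨he, hve⟩, fun ⟨he, hve⟩ => ⟨⟨he, v, hve, hv⟩, hve⟩⟩
  have hreach : ∀ v ∈ oddVerts Dz, H.Reachable z v := fun v hv => by
    obtain ⟨e, ⟨he, u, hue, hu⟩, hve⟩ := exists_mem_of_mem_oddVerts hv
    exact hu.trans (.of_mem_edgeSet (hDH he) hue hve)
  have hdeg := degree_fromEdgeSet (D := Dz) fun e he => G.not_isDiag_of_mem_edgeSet (hD he.1)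
  obtain ⟨z', hz'z, hz'⟩ := (fromEdgeSet Dz).exists_ne_odd_degree_of_exists_odd_degree z
    (by rw [hdeg, hsep z .rfl]; exact hz)
  rw [hdeg] at hz'
  have hzz' := hreach z' hz'
  refine ⟨z', by rw [oddVerts, Set.mem_ofPred_eq, ← hsep z' hzz']; exact hz', hz'z, ?_⟩
  obtain ⟨q⟩ := hzz'
  have hqD : ∀ e ∈ q.bypass.edges, e ∈ D := fun e he => hHD (q.bypass.edges_subset_edgeSet he)
  refine ⟨q.bypass.transfer G fun e he => hD (hqD e he), q.bypass_isPath.transfer _, ?_⟩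
  intro e he
  rw [Set.mem_ofPred_eq, Walk.edges_transfer] at he
  exact hqD e he

end SimpleGraph

namespace IsMinJoin

variable [Fintype V] {G : SimpleGraph V} {T X : Set V} {F : Set (Sym2 V)}

theorem edgeSetWeight_nonneg (hF : IsMinJoin G T F) (hX : IsExtremeSet G F X)
    {D : Set (Sym2 V)} (hD : D ⊆ G.edgeSet) (hDX : oddVerts D ⊆ X) :
    0 ≤ edgeSetWeight F D := by
  induction hn : D.ncard using Nat.strong_induction_on generalizing D with
  | _ n ih =>
  rcases (oddVerts D).eq_empty_or_nonempty with hD0 | ⟨z, hz⟩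
  · have hjoin : IsJoin G (T ∆ ⊥) (F ∆ D) := hF.1.symmDiff (isJoin_iff.mpr ⟨hD, hD0⟩)
    rw [symmDiff_bot] at hjoin
    have := hF.2 _ hjoin
    have := ncard_symmDiff_eq_add_edgeSetWeight F D
    omega
  obtain ⟨z', hz', hz'z, p, hp, hpD⟩ := SimpleGraph.exists_isPath_of_mem_oddVerts hD hz
  set P := {e | e ∈ p.edges}
  have hPodd : oddVerts P = {z, z'} := hp.isTrail.oddVerts_edges hz'z.symm
  have hP : 0 ≤ edgeSetWeight F P := by
    rw [← hp.isTrail.walkWeight_eq]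
    exact (hX z (hDX hz) z' (hDX hz')).trans (distF_le_walkWeight F hp)
  have hrest : 0 ≤ edgeSetWeight F (D \ P) := by
    have hlt : (D \ P).ncard < D.ncard := by
      obtain ⟨e, he, -⟩ := exists_mem_of_mem_oddVerts (hPodd ▸ Set.mem_insert z {z'})
      exact Set.ncard_lt_ncard (Set.sdiff_ssubset_left_iff.mpr ⟨e, hpD he, he⟩)
    refine ih _ (hn ▸ hlt) (Set.sdiff_subset.trans hD) ?_ rfl
    rw [← symmDiff_of_le hpD, symmDiff_comm, oddVerts_symmDiff, hPodd]
    refine Set.symmDiff_subset_union.trans (Set.union_subset hDX ?_)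
    exact Set.insert_subset (hDX hz) (Set.singleton_subset_iff.mpr (hDX hz'))
  rw [← Set.sdiff_union_of_subset hpD, edgeSetWeight_union F Set.disjoint_sdiff_left]
  omega

theorem ncard_le_of_isJoin (hF : IsMinJoin G T F) (hX : IsExtremeSet G F X)
    {T' : Set V} {J : Set (Sym2 V)} (hJ : IsJoin G T' J) (hTT' : T ∆ T' ⊆ X) :
    F.ncard ≤ J.ncard := by
  have hD := hF.1.symmDiff hJ
  have := hF.edgeSetWeight_nonneg hX (isJoin_iff.mp hD).1 ((isJoin_iff.mp hD).2 ▸ hTT')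
  have := ncard_symmDiff_eq_add_edgeSetWeight F (F ∆ J)
  rw [symmDiff_symmDiff_cancel_left] at this
  omega

end IsMinJoin

theorem oddVerts_subset_of_subset_edgeSet {G : SimpleGraph V} {Vg : Set V}
    (hGV : ∀ v w : V, G.Adj v w → v ∈ Vg ∧ w ∈ Vg) {D : Set (Sym2 V)} (hD : D ⊆ G.edgeSet) :
    oddVerts D ⊆ Vg := by
  intro v hv
  obtain ⟨e, he, hve⟩ := exists_mem_of_mem_oddVerts hv
  induction e using Sym2.ind with
  | _ a b =>
    rcases Sym2.mem_iff.mp hve with rfl | rfl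
    exacts [(hGV _ _ (hD he)).1, (hGV _ _ (hD he)).2]

theorem IsMinJoin.ncard_add_ncard_sdiff_le [Fintype V] {G Ghat : SimpleGraph V}
    {Vg T X : Set V} {F F₀ : Set (Sym2 V)} (hGV : ∀ v w : V, G.Adj v w → v ∈ Vg ∧ w ∈ Vg)
    (hF : IsMinJoin G T F) (hX : IsExtremeSet G F X)
    (hnew : ∀ v w : V, Ghat.Adj v w → ¬ G.Adj v w → (v ∈ X ∧ w ∉ Vg) ∨ (w ∈ X ∧ v ∉ Vg))
    (hF₀ : IsJoin Ghat T F₀) :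
    F.ncard + (F₀ \ G.edgeSet).ncard ≤ F₀.ncard := by
  have hJ : IsJoin G (oddVerts (F₀ ∩ G.edgeSet)) (F₀ ∩ G.edgeSet) :=
    isJoin_iff.mpr ⟨Set.inter_subset_right, rfl⟩
  have hsplit : (F₀ ∩ G.edgeSet) ∆ (F₀ \ G.edgeSet) = F₀ :=
    Set.disjoint_sdiff_inter.symm.symmDiff_eq_sup.trans (Set.inter_union_sdiff F₀ _)
  have hTJ : T ∆ oddVerts (F₀ ∩ G.edgeSet) = oddVerts (F₀ \ G.edgeSet) := by
    rw [← (isJoin_iff.mp hF₀).2]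
    nth_rw 1 [← hsplit]
    rw [oddVerts_symmDiff, symmDiff_symmDiff_self']
  have hTJX : T ∆ oddVerts (F₀ ∩ G.edgeSet) ⊆ X := by
    intro v hv
    have hvVg : v ∈ Vg := by
      rw [← (isJoin_iff.mp hF.1).2] at hv
      exact Set.union_subset (oddVerts_subset_of_subset_edgeSet hGV hF.1.1)
        (oddVerts_subset_of_subset_edgeSet hGV hJ.1) (Set.symmDiff_subset_union hv)
    rw [hTJ] at hv
    obtain ⟨e, ⟨he₀, heG⟩, hve⟩ := exists_mem_of_mem_oddVerts hv
    induction e using Sym2.ind with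
    | _ a b =>
      rcases Sym2.mem_iff.mp hve with rfl | rfl <;>
        rcases hnew _ _ (hF₀.1 he₀) heG with ⟨ha, hb⟩ | ⟨hb, ha⟩ <;> tauto
  have := hF.ncard_le_of_isJoin hX hJ hTJX
  have := Set.ncard_inter_add_ncard_sdiff_eq_ncard F₀ G.edgeSet
  omega

theorem stmt_9_general [Fintype V] (G Ghat : SimpleGraph V) (Vg T A B X : Set V)
    (F : Set (Sym2 V))
    (hGV : ∀ v w : V, G.Adj v w → v ∈ Vg ∧ w ∈ Vg)
    (hF : IsMinJoin G T F) (hX : MaxBipExtreme G F A B X)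
    (hsub : G ≤ Ghat)
    (hnew : ∀ v w : V, Ghat.Adj v w → ¬ G.Adj v w →
      (v ∈ X ∧ w ∉ Vg) ∨ (w ∈ X ∧ v ∉ Vg)) :
    ∀ F' : Set (Sym2 V), IsMinJoin Ghat T F' ↔ IsMinJoin G T F' := by
  have key := fun F₀ ↦ hF.ncard_add_ncard_sdiff_le (F₀ := F₀) hGV hX.1 hnew
  have hlift : ∀ F₀, IsJoin G T F₀ → IsJoin Ghat T F₀ :=
    fun F₀ h ↦ ⟨h.1.trans (SimpleGraph.edgeSet_mono hsub), h.2⟩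
  intro F'
  constructor
  · intro hF'
    have hle := hF'.2 F (hlift F hF.1)
    have hnone : (F' \ G.edgeSet).ncard = 0 := by have := key F' hF'.1; omega
    have hF'G : F' ⊆ G.edgeSet := Set.sdiff_eq_empty.mp ((Set.ncard_eq_zero).mp hnone)
    exact ⟨⟨hF'G, hF'.1.2⟩, fun F₀ h₀ ↦ hle.trans (hF.2 F₀ h₀)⟩
  · intro hF'
    refine ⟨hlift F' hF'.1, fun F₀ h₀ ↦ ?_⟩
    have := key F₀ h₀
    have := hF'.2 F hF.1
    omega

/-- if `(Ĝ, T̂)` is obtained from `(G, T)` by adding new vertices and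
edges joining new vertices to `X` (with `T̂ = T`), then a set of edges is a minimum join
of `(Ĝ, T̂)` iff it is a minimum join of `(G, T)`. -/
theorem stmt_9 [Fintype V] (G Ghat : SimpleGraph V) (Vg T A B X : Set V)
    (F : Set (Sym2 V))
    (hGV : ∀ v w : V, G.Adj v w → v ∈ Vg ∧ w ∈ Vg)
    (hT : T ⊆ Vg) (hGT : IsGraft G T)
    (hbip : IsBipartitionOn G Vg A B)
    (hF : IsMinJoin G T F) (hXA : X ⊆ A) (hX : MaxBipExtreme G F A B X)
    (hsub : G ≤ Ghat)
    (hnew : ∀ v w : V, Ghat.Adj v w → ¬ G.Adj v w →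
      (v ∈ X ∧ w ∉ Vg) ∨ (w ∈ X ∧ v ∉ Vg))
    (hGhat : IsGraft Ghat T) :
    ∀ F' : Set (Sym2 V), IsMinJoin Ghat T F' ↔ IsMinJoin G T F' :=
  stmt_9_general G Ghat Vg T A B X F hGV hF hX hsub hnew
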